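/- There exist a constant C > 0 and N ∈ ℕ such that for all even integers n ≥ N, | 4n · min{ MSE(n, m) : m ∈ ℕ, m | n, 1 ≤ m, 2m ≤ n } − (1 + 2/π) | ≤ C/n. That is, the ratio of the best k-fold cross-validation mean-squared error for Majority under uniformly random labels to the mean-squared error 1/(4n) of an independent validation set of size n equals 1 + 2/π + O(1/n). -/

import Mathlib

/-!
With `s = n - m`, Vandermonde's identity writes `C(s-1, ⌊s/2⌋)` as
`Σ_j C(m-1, j) · C(n-2m, ⌊s/2⌋ - j)`, and Cauchy–Schwarz against
`Σ_j C(n-2m, ⌊s/2⌋ - j) ≤ 2^(n-2m)` gives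
`2^n · Cov(n, m) ≥ C(s-1, ⌊s/2⌋)² / 2^(n-2m)`.
Wallis' product pins the squared middle binomial coefficient between `4^s / (2π(s+1))` and
`4^s / (2π(s-1))`, so `Cov(n, m) ≥ 1 / (2π(s+1))` for every admissible `m`, while for `m = n/2`
the sum collapses to the single term `C(m-1, ⌊m/2⌋)² / 4^m ≤ 1 / (2π(m-1))`.
Since `4n · MSE(n, m) = 1 + 4s · Cov(n, m)` and `s ≥ n/2`, both bounds give `1 + 2/π + O(1/n)`.
-/

open Real

/-- Binomial coefficient with an integer lower index, with the convention that it
vanishes for negative lower index (and, via `Nat.choose`, above the upper index). -/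
def ibinom (a : ℕ) (b : ℤ) : ℕ := if 0 ≤ b then a.choose b.toNat else 0

/-- The fold covariance of k-fold cross-validation of the Majority algorithm on `n`
i.i.d. uniformly random binary labels with fold size `m = n/k`:
`Cov(n, m) = 2^{-n} · Σ_{j=0}^{m-1} binom(m-1, j)² · binom(n-2m, ⌊(n-m)/2⌋ - j)`. -/
noncomputable def Cov (n m : ℕ) : ℝ :=
  (2 : ℝ)⁻¹ ^ n * ∑ j ∈ Finset.range m,
    ((m - 1).choose j : ℝ) ^ 2 * (ibinom (n - 2 * m) (((n : ℤ) - m) / 2 - j) : ℝ)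

/-- The mean-squared error of the k-fold cross-validation risk estimator of Majority
under uniformly random labels, with fold size `m = n/k`:
`MSE(n, m) = (1 - m/n)·Cov(n, m) + 1/(4n)`. -/
noncomputable def MSE (n m : ℕ) : ℝ :=
  (1 - (m : ℝ) / n) * Cov n m + 1 / (4 * n)

open Finset Nat

theorem Real.Wallis.W_eq_centralBinom (r : ℕ) :
    Wallis.W r = 16 ^ r / ((centralBinom r : ℝ) ^ 2 * (2 * r + 1)) := by
  have hfact : ((2 * r)! : ℝ) = centralBinom r * r ! * r ! := by
    have h := Nat.choose_mul_factorial_mul_factorial (show r ≤ 2 * r by omega)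
    rw [show 2 * r - r = r by omega] at h
    exact_mod_cast h.symm
  have hr : (r ! : ℝ) ≠ 0 := by positivity
  rw [Wallis.W_eq_factorial_ratio, hfact, pow_mul]
  field_simp
  norm_num

theorem two_mul_sixteen_pow_le_pi_mul_centralBinom_sq (r : ℕ) :
    2 * 16 ^ r ≤ π * (centralBinom r : ℝ) ^ 2 * (2 * r + 1) := by
  have hc : (0 : ℝ) < centralBinom r := mod_cast centralBinom_pos r
  have h := Wallis.W_le r
  rw [Wallis.W_eq_centralBinom, div_le_div_iff₀ (by positivity) two_pos] at h
  linarith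

theorem pi_mul_centralBinom_sq_le (r : ℕ) :
    π * (centralBinom r : ℝ) ^ 2 * (2 * r + 1) ^ 2 ≤ 4 * (r + 1) * 16 ^ r := by
  have hc : (0 : ℝ) < centralBinom r := mod_cast centralBinom_pos r
  have h := Wallis.le_W r
  rw [Wallis.W_eq_centralBinom, _root_.div_mul_div_comm,
    div_le_div_iff₀ (by positivity) (by positivity)] at h
  linarith

theorem four_pow_two_mul (k : ℕ) : (4 : ℝ) ^ (2 * k) = 16 ^ k := by
  rw [pow_mul]; norm_num

theorem Nat.centralBinom_succ_eq_two_mul_choose (q : ℕ) :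
    centralBinom (q + 1) = 2 * (2 * q + 1).choose (q + 1) := by
  rw [centralBinom_eq_two_mul_choose, show 2 * (q + 1) = 2 * q + 1 + 1 by ring,
    choose_succ_succ', choose_symm_half]
  ring

theorem four_pow_le_two_pi_mul_choose_sq (s : ℕ) (hs : 1 ≤ s) :
    (4 : ℝ) ^ s ≤ 2 * π * (s + 1) * ((s - 1).choose (s / 2) : ℝ) ^ 2 := by
  have hπ := pi_pos
  obtain ⟨r, rfl | rfl⟩ := Nat.even_or_odd' s
  · obtain ⟨q, rfl⟩ : ∃ q, r = q + 1 := ⟨r - 1, by omega⟩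
    have h := two_mul_sixteen_pow_le_pi_mul_centralBinom_sq (q + 1)
    rw [centralBinom_succ_eq_two_mul_choose] at h
    rw [show 2 * (q + 1) - 1 = 2 * q + 1 by omega, show 2 * (q + 1) / 2 = q + 1 by omega,
      four_pow_two_mul]
    push_cast at h ⊢
    linarith
  · have h := two_mul_sixteen_pow_le_pi_mul_centralBinom_sq r
    rw [add_tsub_cancel_right, show (2 * r + 1) / 2 = r by omega,
      ← centralBinom_eq_two_mul_choose, pow_succ (4 : ℝ), four_pow_two_mul]
    push_cast at h ⊢
    nlinarith [mul_nonneg hπ.le (sq_nonneg (centralBinom r : ℝ))]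

theorem two_pi_mul_choose_sq_le_four_pow (s : ℕ) :
    2 * π * (s - 1) * ((s - 1).choose (s / 2) : ℝ) ^ 2 ≤ 4 ^ s := by
  have hπ := pi_pos
  obtain ⟨r, rfl | rfl⟩ := Nat.even_or_odd' s
  · obtain _ | q := r
    · norm_num
      linarith
    have h := pi_mul_centralBinom_sq_le (q + 1)
    rw [centralBinom_succ_eq_two_mul_choose] at h
    rw [show 2 * (q + 1) - 1 = 2 * q + 1 by omega, show 2 * (q + 1) / 2 = q + 1 by omega,
      four_pow_two_mul]
    push_cast at h ⊢
    set c := ((2 * q + 1).choose (q + 1) : ℝ)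
    refine le_of_mul_le_mul_right ?_ (show (0 : ℝ) < q + 2 by positivity)
    nlinarith [mul_nonneg hπ.le (sq_nonneg c),
      mul_nonneg (mul_nonneg hπ.le (sq_nonneg c)) q.cast_nonneg]
  · have h := pi_mul_centralBinom_sq_le r
    rw [add_tsub_cancel_right, show (2 * r + 1) / 2 = r by omega,
      ← centralBinom_eq_two_mul_choose, pow_succ (4 : ℝ), four_pow_two_mul]
    push_cast at h ⊢
    refine le_of_mul_le_mul_right ?_ (show (0 : ℝ) < r + 1 by positivity)
    nlinarith [mul_nonneg hπ.le (sq_nonneg (centralBinom r : ℝ))]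

theorem ibinom_natCast (a k : ℕ) : ibinom a k = a.choose k := by
  simp [ibinom]

theorem ibinom_of_neg {a : ℕ} {b : ℤ} (hb : b < 0) : ibinom a b = 0 := by
  simp [ibinom, not_le.2 hb]

theorem ibinom_zero_left (c : ℤ) : ibinom 0 c = if c = 0 then 1 else 0 := by
  rcases lt_trichotomy c 0 with hc | rfl | hc
  · simp [ibinom_of_neg hc, hc.ne]
  · rfl
  · simp [ibinom, hc.le, hc.ne', choose_eq_zero_of_lt (Int.lt_toNat.2 hc)]

theorem sum_choose_le_two_pow (b : ℕ) (T : Finset ℕ) : ∑ k ∈ T, b.choose k ≤ 2 ^ b :=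
  calc ∑ k ∈ T, b.choose k = ∑ k ∈ T with k ∈ range (b + 1), b.choose k :=
        (sum_filter_of_ne fun k _ hk => mem_range.2 <| by
          by_contra h; exact hk (choose_eq_zero_of_lt (by omega))).symm
    _ ≤ ∑ k ∈ range (b + 1), b.choose k :=
        sum_le_sum_of_subset fun k hk => (mem_filter.1 hk).2
    _ = 2 ^ b := sum_range_choose b

theorem sum_ibinom_sub_le_two_pow (b m : ℕ) (t : ℤ) :
    ∑ j ∈ range m, ibinom b (t - j) ≤ 2 ^ b :=
  calc ∑ j ∈ range m, ibinom b (t - j)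
        = ∑ j ∈ (range m).filter fun j : ℕ => 0 ≤ t - j, b.choose (t - j).toNat := by
          rw [sum_filter]; rfl
    _ = ∑ k ∈ ((range m).filter fun j : ℕ => 0 ≤ t - j).image fun j : ℕ => (t - j).toNat,
          b.choose k :=
          (sum_image fun i hi j hj h => by
            simp only [mem_coe, mem_filter] at hi hj h; omega).symm
    _ ≤ 2 ^ b := sum_choose_le_two_pow b _

theorem sum_choose_mul_ibinom (a b m T : ℕ) (ham : a < m) :
    ∑ j ∈ range m, a.choose j * ibinom b (T - j) = (a + b).choose T := by
  set M := max m (T + 1)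
  have hm : ∑ j ∈ range m, a.choose j * ibinom b (T - j)
      = ∑ j ∈ range M, a.choose j * ibinom b (T - j) :=
    sum_subset (range_subset_range.2 (le_max_left ..)) fun j _ hj => by
      rw [choose_eq_zero_of_lt (by simp only [mem_range] at hj; omega), zero_mul]
  have hT : ∑ j ∈ range (T + 1), a.choose j * ibinom b (T - j)
      = ∑ j ∈ range M, a.choose j * ibinom b (T - j) :=
    sum_subset (range_subset_range.2 (le_max_right ..)) fun j _ hj => by
      rw [ibinom_of_neg (by simp only [mem_range] at hj; omega), mul_zero]
  rw [hm, ← hT, add_choose_eq, Finset.Nat.sum_antidiagonal_eq_sum_range_succ_mk]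
  refine sum_congr rfl fun j hj => ?_
  rw [← Nat.cast_sub (by simp only [mem_range] at hj; omega), ibinom_natCast]

theorem choose_sq_le_sum_mul_two_pow (a b m T : ℕ) (ham : a < m) :
    (a + b).choose T ^ 2 ≤ (∑ j ∈ range m, a.choose j ^ 2 * ibinom b (T - j)) * 2 ^ b := by
  rw [← sum_choose_mul_ibinom a b m T ham]
  calc _ ≤ (∑ j ∈ range m, a.choose j ^ 2 * ibinom b (T - j)) *
          ∑ j ∈ range m, ibinom b (T - j) :=
        sum_sq_le_sum_mul_sum_of_sq_le_mul _ (fun _ _ => zero_le _) (fun _ _ => zero_le _)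
          fun j _ => (by ring : _ = _).le
    _ ≤ _ := Nat.mul_le_mul_left _ (sum_ibinom_sub_le_two_pow b m T)

theorem inv_two_pi_mul_le_Cov {n m : ℕ} (hm : 1 ≤ m) (hmn : 2 * m ≤ n) :
    (2 * π * ((n - m : ℕ) + 1))⁻¹ ≤ Cov n m := by
  set s := n - m
  set b := n - 2 * m
  obtain ⟨T, hT⟩ : ∃ T, s / 2 = T := ⟨_, rfl⟩
  have ht : ((n : ℤ) - m) / 2 = T := by omega
  have hCS := choose_sq_le_sum_mul_two_pow (m - 1) b m T (by omega)
  rw [show m - 1 + b = s - 1 by omega] at hCS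
  have hWallis := four_pow_le_two_pi_mul_choose_sq s (by omega)
  rw [hT] at hWallis
  have hpow : (2 : ℝ) ^ n * 2 ^ b = 4 ^ s := by
    rw [← pow_add, show n + b = 2 * s by omega, pow_mul]
    norm_num
  rw [Cov, ht, inv_pow, ← div_eq_inv_mul, le_div_iff₀ (by positivity),
    inv_mul_le_iff₀ (by positivity)]
  set S := ∑ j ∈ range m, ((m - 1).choose j : ℝ) ^ 2 * (ibinom b (T - j) : ℝ)
  have hCS' : ((s - 1).choose T : ℝ) ^ 2 ≤ S * 2 ^ b := by
    have := (Nat.cast_le (α := ℝ)).2 hCS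
    push_cast at this
    exact this
  refine le_of_mul_le_mul_right ?_ (show (0 : ℝ) < 2 ^ b by positivity)
  calc (2 : ℝ) ^ n * 2 ^ b = 4 ^ s := hpow
    _ ≤ 2 * π * (s + 1) * ((s - 1).choose T : ℝ) ^ 2 := hWallis
    _ ≤ 2 * π * (s + 1) * (S * 2 ^ b) := by gcongr
    _ = 2 * π * (s + 1) * S * 2 ^ b := by ring

theorem Cov_two_mul_self {m : ℕ} (hm : 1 ≤ m) :
    Cov (2 * m) m = ((m - 1).choose (m / 2) : ℝ) ^ 2 / 4 ^ m := by
  have ht : (((2 * m : ℕ) : ℤ) - m) / 2 = ((m / 2 : ℕ) : ℤ) := by omega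
  rw [Cov, Nat.sub_self, ht, sum_eq_single (m / 2)]
  · rw [sub_self, ibinom_zero_left, if_pos rfl, inv_pow, pow_mul]
    norm_num
    ring
  · intro j _ hj
    rw [ibinom_zero_left, if_neg (by omega), Nat.cast_zero, mul_zero]
  · exact fun h => absurd (mem_range.2 (by omega)) h

theorem le_four_mul_MSE {n m : ℕ} (hm : 1 ≤ m) (hmn : 2 * m ≤ n) :
    1 + 2 / π - 2 / n ≤ 4 * n * MSE n m := by
  have hn : (0 : ℝ) < n := by exact_mod_cast (show 0 < n by omega)
  have hsn : (n : ℝ) ≤ 2 * (n - m : ℕ) := by exact_mod_cast (show n ≤ 2 * (n - m) by omega)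
  have hcov := inv_two_pi_mul_le_Cov hm hmn
  have hMSE : 4 * n * MSE n m = 4 * (n - m : ℕ) * Cov n m + 1 := by
    rw [MSE, Nat.cast_sub (by omega)]
    field_simp
  set s : ℝ := ((n - m : ℕ) : ℝ)
  have hs : 0 ≤ s := Nat.cast_nonneg _
  have hsplit : 4 * s * (2 * π * (s + 1))⁻¹ = 2 / π - 2 / (π * (s + 1)) := by
    field_simp
    ring
  have htail : 2 / (π * (s + 1)) ≤ 2 / n :=
    div_le_div_of_nonneg_left zero_le_two hn (by nlinarith [pi_gt_three])
  rw [hMSE]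
  nlinarith [mul_le_mul_of_nonneg_left hcov (by positivity : 0 ≤ 4 * s)]

theorem four_mul_MSE_half_le {n : ℕ} (hn : Even n) (h6 : 6 ≤ n) :
    4 * n * MSE n (n / 2) ≤ 1 + 2 / π + 2 / n := by
  obtain ⟨m, rfl⟩ := hn
  rw [show (m + m) / 2 = m by omega, show m + m = 2 * m by ring]
  have hm : (3 : ℝ) ≤ m := by exact_mod_cast (show 3 ≤ m by omega)
  have hcov : Cov (2 * m) m ≤ (2 * π * (m - 1))⁻¹ := by
    rw [Cov_two_mul_self (by omega), div_le_iff₀ (by positivity), ← div_eq_inv_mul,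
      le_div_iff₀ (by nlinarith [pi_pos])]
    linarith [two_pi_mul_choose_sq_le_four_pow m]
  have hMSE : 4 * ((2 * m : ℕ) : ℝ) * MSE (2 * m) m = 4 * m * Cov (2 * m) m + 1 := by
    rw [MSE]
    push_cast
    field_simp
    ring
  have hsplit : 4 * m * (2 * π * (m - 1))⁻¹ = 2 / π + 2 / (π * (m - 1)) := by
    have : (m : ℝ) - 1 ≠ 0 := by linarith
    field_simp
    ring
  have htail : 2 / (π * (m - 1)) ≤ 2 / ((2 * m : ℕ) : ℝ) := by
    push_cast
    exact div_le_div_of_nonneg_left zero_le_two (by positivity) (by nlinarith [pi_gt_three])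
  rw [hMSE]
  nlinarith [mul_le_mul_of_nonneg_left hcov (by positivity : 0 ≤ 4 * (m : ℝ))]

/-- **Constant-factor gap between cross-validation and an independent hold-out set.**
For sufficiently large even `n`, the ratio of the best k-fold cross-validation MSE
for Majority under uniformly random labels to the MSE `1/(4n)` of an independent
validation set of size `n` equals `1 + 2/π + O(1/n)`:
`|4n · min_{m ∣ n, 1 ≤ m, 2m ≤ n} MSE(n, m) - (1 + 2/π)| ≤ C/n`. -/
theorem mse_constant_factor_gap :
    ∃ C : ℝ, 0 < C ∧ ∃ N : ℕ, ∀ n : ℕ, N ≤ n → Even n →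
      |4 * (n : ℝ) *
          sInf {x : ℝ | ∃ m : ℕ, m ∣ n ∧ 1 ≤ m ∧ 2 * m ≤ n ∧ x = MSE n m}
        - (1 + 2 / π)| ≤ C / n := by
  refine ⟨2, two_pos, 6, fun n hn heven => ?_⟩
  set S := {x : ℝ | ∃ m : ℕ, m ∣ n ∧ 1 ≤ m ∧ 2 * m ≤ n ∧ x = MSE n m}
  have hhalf : MSE n (n / 2) ∈ S :=
    ⟨n / 2, Nat.div_dvd_of_dvd heven.two_dvd, by omega, by omega, rfl⟩
  have hfin : S.Finite := ((Set.finite_Iic n).image (MSE n)).subset <| by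
    rintro _ ⟨m, -, -, hmn, rfl⟩
    exact ⟨m, Set.mem_Iic.2 (by omega), rfl⟩
  obtain ⟨m, -, hm, hmn, hmin⟩ := Set.Nonempty.csInf_mem ⟨_, hhalf⟩ hfin
  have hle : sInf S ≤ MSE n (n / 2) := csInf_le hfin.bddBelow hhalf
  have hlower := le_four_mul_MSE hm hmn
  have hupper := four_mul_MSE_half_le heven hn
  rw [← hmin] at hlower
  rw [abs_le]
  constructor <;> nlinarith [(Nat.cast_nonneg n : (0 : ℝ) ≤ n)]
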